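/- Let λ = (λ_1,…,λ_r) be a partition of n with r parts, and set α = (λ_2,…,λ_r). Then the distribution of the major index over standard Young tableaux of shape λ with the maximum possible number n−λ_1 of descents satisfies f_{λ,n−λ_1}(q) = q^{binom(n−λ_1+1, 2)}·s_{α'}(1, q, q², …, q^{λ_1−1}), where α' is the conjugate partition of α and s_{α'} is the Schur polynomial indexed by α' evaluated at the λ_1 arguments 1, q, …, q^{λ_1−1}. -/

import Mathlib

open Polynomial
open scoped Classical

noncomputable section

/-- The set of cells of the skew shape `outer \ inner`, where `outer` and `inner` are
lists of row lengths (rows and columns are 0-indexed): the cell `(r, c)` is present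
iff `inner.getD r 0 ≤ c < outer.getD r 0`. -/
def skewCells (outer inner : List ℕ) : Finset (ℕ × ℕ) :=
  ((Finset.range outer.length) ×ˢ (Finset.range (outer.foldr max 0))).filter
    (fun p => inner.getD p.1 0 ≤ p.2 ∧ p.2 < outer.getD p.1 0)

/-- `pos` encodes a standard Young tableau of skew shape `outer \ inner`:
`pos k` is the cell containing the entry `k + 1`.  The conditions say that the
entries are a bijective filling which increases left to right along rows and
top to bottom down columns. -/
def IsSYT (outer inner : List ℕ)
    (pos : Fin (skewCells outer inner).card → ↥(skewCells outer inner)) : Prop :=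
  Function.Injective pos ∧
  (∀ a b, ((pos a : ℕ × ℕ)).1 = ((pos b : ℕ × ℕ)).1 →
      ((pos a : ℕ × ℕ)).2 < ((pos b : ℕ × ℕ)).2 → a < b) ∧
  (∀ a b, ((pos a : ℕ × ℕ)).2 = ((pos b : ℕ × ℕ)).2 →
      ((pos a : ℕ × ℕ)).1 < ((pos b : ℕ × ℕ)).1 → a < b)

/-- The finite set of standard Young tableaux of skew shape `outer \ inner`. -/
def SYTs (outer inner : List ℕ) :
    Finset (Fin (skewCells outer inner).card → ↥(skewCells outer inner)) :=
  Finset.univ.filter (IsSYT outer inner)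

/-- The descent set of the tableau `pos`: the values `v` such that `v + 1` lies in a
strictly lower row than `v` (entry `v` is at index `v - 1`, entry `v+1` at index `v`). -/
def desSet (outer inner : List ℕ)
    (pos : Fin (skewCells outer inner).card → ↥(skewCells outer inner)) : Finset ℕ :=
  (Finset.range (skewCells outer inner).card).filter
    (fun v => ∃ a b : Fin (skewCells outer inner).card,
      (a : ℕ) + 1 = v ∧ (b : ℕ) = v ∧ ((pos a : ℕ × ℕ)).1 < ((pos b : ℕ × ℕ)).1)

/-- The major index of a tableau: the sum of its descents. -/
def majStat (outer inner : List ℕ)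
    (pos : Fin (skewCells outer inner).card → ↥(skewCells outer inner)) : ℕ :=
  (desSet outer inner pos).sum id

/-- The number of descents of a tableau. -/
def desStat (outer inner : List ℕ)
    (pos : Fin (skewCells outer inner).card → ↥(skewCells outer inner)) : ℕ :=
  (desSet outer inner pos).card

/-- `f_{outer∖inner, i}(q) = Σ_{τ ∈ SYT(outer∖inner), des(τ) = i} q^{maj(τ)} ∈ ℤ[q]`. -/
def fSkew (outer inner : List ℕ) (i : ℕ) : Polynomial ℤ :=
  ∑ pos ∈ (SYTs outer inner).filter (fun pos => desStat outer inner pos = i),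
    X ^ majStat outer inner pos

/-- `f_{λ, i}(q)` for a straight (non-skew) shape `λ`. -/
def fPoly (lam : List ℕ) (i : ℕ) : Polynomial ℤ := fSkew lam [] i

/-- Gaussian binomial coefficients for natural arguments, via the q-Pascal recurrence
`[M+1, N+1]_q = [M, N+1]_q + q^(M-N) [M, N]_q`, with `[M, 0]_q = 1`, `[0, N+1]_q = 0`. -/
def qBinomAux : ℕ → ℕ → Polynomial ℤ
  | _, 0 => 1
  | 0, _ + 1 => 0
  | M + 1, N + 1 => qBinomAux M (N + 1) + X ^ (M - N) * qBinomAux M N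

/-- Gaussian binomial coefficient `[M choose N]_q ∈ ℤ[q]`, with the convention that
it is `0` unless `0 ≤ N ≤ M`. -/
def qBinom (M N : ℤ) : Polynomial ℤ :=
  if 0 ≤ N ∧ N ≤ M then qBinomAux M.toNat N.toNat else 0

/-- The conjugate partition of `μ` (as a list of row lengths): part `j` (0-indexed)
is the number of parts of `μ` exceeding `j`. -/
def conj (mu : List ℕ) : List ℕ :=
  (List.range (mu.headD 0)).map (fun j => (mu.filter (fun x => j < x)).length)

/-- The principal specialization `s_μ(1, q, q², …, q^{m-1})` of the Schur polynomial:
the sum over semistandard Young tableaux of shape `μ` with entries in `{1,…,m}`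
(here 0-indexed as `Fin m`, an entry `e` contributing weight `q^e`, i.e. `x_i = q^{i-1}`)
of `q^{Σ_cells (entry - 1)}`.  Rows weakly increase and columns strictly increase. -/
def schurSpec (mu : List ℕ) (m : ℕ) : Polynomial ℤ :=
  ∑ T ∈ Finset.univ.filter
      (fun T : (↥(skewCells mu []) → Fin m) =>
        (∀ p q : ↥(skewCells mu []), ((p : ℕ × ℕ)).1 = ((q : ℕ × ℕ)).1 →
            ((p : ℕ × ℕ)).2 ≤ ((q : ℕ × ℕ)).2 → T p ≤ T q) ∧
        (∀ p q : ↥(skewCells mu []), ((p : ℕ × ℕ)).2 = ((q : ℕ × ℕ)).2 →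
            ((p : ℕ × ℕ)).1 < ((q : ℕ × ℕ)).1 → T p < T q)),
    X ^ (∑ p : ↥(skewCells mu []), ((T p : ℕ)))

/-!
Write `λ = m :: μ`. Every descent `b` of a standard tableau has `b + 1` below the first row, so
there are at most `|μ|` descents, with equality iff every entry below the first row is the top of
a descent. Send such a tableau to the filling `T` of `μ'` that puts into cell `(j, i)` the
number of first-row entries smaller than the entry of cell `(i + 1, j)` of `λ`, minus one. It is
semistandard with entries `< m`, and it determines the tableau: the tableau lists the cells of `λ`
in the lexicographic order of the keys `(j, 0)` for `(0, j)` and `(T (j, i), i + 1)` for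
`(i + 1, j)`, and conversely listing the cells in this order produces a standard tableau with the
maximal number of descents for every semistandard `T`.

Each entry `b` below the first row is the number of first-row entries smaller than it plus its
rank among the entries below the first row, so summing over these `|μ|` entries gives
`maj = ∑ T + |μ| + binom(|μ|, 2) = binom(|μ| + 1, 2) + ∑ T`.
-/

open Function

section Shapes

theorem getD_le_foldr_max (l : List ℕ) (i : ℕ) : l.getD i 0 ≤ l.foldr max 0 := by
  induction l generalizing i with
  | nil => simp
  | cons a t ih =>
    cases i with
    | zero => simp
    | succ i => simpa using le_trans (ih i) (le_max_right _ _)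

theorem getD_le_getD_of_pairwise {l : List ℕ} (h : l.Pairwise (· ≥ ·)) {i j : ℕ}
    (hij : i ≤ j) : l.getD j 0 ≤ l.getD i 0 := by
  by_cases hj : j < l.length
  · rw [List.getD_eq_getElem _ _ hj, List.getD_eq_getElem _ _ (hij.trans_lt hj)]
    rcases hij.eq_or_lt with rfl | hlt
    · exact le_rfl
    · exact List.pairwise_iff_getElem.mp h i j _ hj hlt
  · rw [List.getD_eq_default _ _ (not_lt.mp hj)]
    exact Nat.zero_le _

theorem mem_skewCells_nil {outer : List ℕ} {p : ℕ × ℕ} :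
    p ∈ skewCells outer [] ↔ p.1 < outer.length ∧ p.2 < outer.getD p.1 0 := by
  simp only [skewCells, Finset.mem_filter, Finset.mem_product, Finset.mem_range]
  constructor
  · rintro ⟨⟨h1, _⟩, _, h3⟩
    exact ⟨h1, h3⟩
  · rintro ⟨h1, h2⟩
    exact ⟨⟨h1, h2.trans_le (getD_le_foldr_max _ _)⟩, by simp, h2⟩

theorem sum_range_getD (l : List ℕ) : ∑ i ∈ Finset.range l.length, l.getD i 0 = l.sum := by
  induction l with
  | nil => simp
  | cons a t ih =>
    rw [List.length_cons, Finset.sum_range_succ', List.sum_cons, ← ih, add_comm]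
    simp

theorem card_skewCells_nil (outer : List ℕ) : (skewCells outer []).card = outer.sum := by
  rw [← sum_range_getD, Finset.card_eq_sum_card_fiberwise (f := Prod.fst)
    (fun p hp => Finset.mem_range.mpr (mem_skewCells_nil.mp hp).1)]
  refine Finset.sum_congr rfl fun i hi => ?_
  have hrow : (skewCells outer []).filter (fun p => p.1 = i) =
      (Finset.range (outer.getD i 0)).image fun j => (i, j) := by
    ext ⟨x, y⟩
    simp only [Finset.mem_filter, mem_skewCells_nil, Finset.mem_image, Finset.mem_range,
      Prod.mk.injEq]
    constructor
    · rintro ⟨⟨-, hy⟩, rfl⟩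
      exact ⟨y, hy, rfl, rfl⟩
    · rintro ⟨j, hj, rfl, rfl⟩
      exact ⟨⟨Finset.mem_range.mp hi, hj⟩, rfl⟩
  rw [hrow, Finset.card_image_of_injective _ fun _ _ h => (Prod.mk.inj h).2, Finset.card_range]

theorem lt_length_filter_iff {l : List ℕ} (h : l.Pairwise (· ≥ ·)) (j i : ℕ) :
    i < (l.filter (fun x => j < x)).length ↔ i < l.length ∧ j < l.getD i 0 := by
  induction l generalizing i with
  | nil => simp
  | cons a t ih =>
    by_cases hja : j < a
    · rw [List.filter_cons_of_pos (by simpa using hja)]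
      cases i with
      | zero => simp [hja]
      | succ i => simpa using ih h.of_cons i
    · have hnil : (a :: t).filter (fun x => j < x) = [] := by
        rw [List.filter_eq_nil_iff]
        intro x hx
        have : x ≤ a := by
          rcases List.mem_cons.mp hx with rfl | hx
          · exact le_rfl
          · exact List.rel_of_pairwise_cons h hx
        simp only [decide_eq_true_eq]
        omega
      have := getD_le_getD_of_pairwise h (Nat.zero_le i)
      simp only [hnil, List.length_nil, Nat.not_lt_zero, false_iff, not_and]
      simp only [List.getD_cons_zero] at this
      omega

theorem mem_skewCells_conj {μ : List ℕ} (h : μ.Pairwise (· ≥ ·)) {j i : ℕ} :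
    (j, i) ∈ skewCells (conj μ) [] ↔ i < μ.length ∧ j < μ.getD i 0 := by
  rw [mem_skewCells_nil, conj, List.length_map, List.length_range]
  constructor
  · rintro ⟨hj, hi⟩
    rw [List.getD_eq_getElem _ _ (by simpa using hj)] at hi
    simp only [List.getElem_map, List.getElem_range] at hi
    exact (lt_length_filter_iff h j i).mp hi
  · rintro ⟨hi, hj⟩
    have hj0 : j < μ.headD 0 := by
      have := getD_le_getD_of_pairwise h (Nat.zero_le i)
      cases μ with
      | nil => simp at hi
      | cons a t =>
        simp only [List.getD_cons_zero] at this
        simp only [List.headD_cons]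
        omega
    refine ⟨hj0, ?_⟩
    rw [List.getD_eq_getElem _ _ (by simpa using hj0)]
    simp only [List.getElem_map, List.getElem_range]
    exact (lt_length_filter_iff h j i).mpr ⟨hi, hj⟩

theorem succ_mem_skewCells_cons_iff {m : ℕ} {μ : List ℕ} (hs : (m :: μ).Pairwise (· ≥ ·))
    {i j : ℕ} : (i + 1, j) ∈ skewCells (m :: μ) [] ↔ (j, i) ∈ skewCells (conj μ) [] := by
  rw [mem_skewCells_nil, mem_skewCells_conj hs.of_cons]
  simp

theorem zero_mem_skewCells_cons_iff {m : ℕ} {μ : List ℕ} {j : ℕ} :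
    (0, j) ∈ skewCells (m :: μ) [] ↔ j < m := by
  simp [mem_skewCells_nil]

theorem card_filter_row_pos_skewCells_cons (m : ℕ) (μ : List ℕ) :
    ((skewCells (m :: μ) []).filter (fun c => 0 < c.1)).card = μ.sum := by
  have hshift : (skewCells (m :: μ) []).filter (fun c => 0 < c.1) =
      (skewCells μ []).image (fun c => (c.1 + 1, c.2)) := by
    ext ⟨i, j⟩
    cases i <;> simp [mem_skewCells_nil]
  have hinj : Injective (fun c : ℕ × ℕ => (c.1 + 1, c.2)) := fun c d h => by
    simp only [Prod.mk.injEq, Nat.add_right_cancel_iff] at h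
    exact Prod.ext h.1 h.2
  rw [hshift, Finset.card_image_of_injective _ hinj, card_skewCells_nil]

end Shapes

section Order

theorem exists_bijective_strictMono_comp {α β : Type*} [Fintype α] [LinearOrder β]
    {f : α → β} (hf : Injective f) {k : ℕ} (hk : Fintype.card α = k) :
    ∃ e : Fin k → α, Bijective e ∧ StrictMono (f ∘ e) := by
  let _ : LinearOrder α := LinearOrder.lift' f hf
  let e := Fintype.orderIsoFinOfCardEq α hk
  exact ⟨e, e.bijective, fun _ _ h => e.strictMono h⟩

theorem eq_of_strictMono_comp {α β : Type*} [LinearOrder β] {f : α → β} (hf : Injective f)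
    {k : ℕ} {e e' : Fin k → α} (he : Surjective e) (he' : Surjective e')
    (hm : StrictMono (f ∘ e)) (hm' : StrictMono (f ∘ e')) : e = e' := by
  have : f ∘ e = f ∘ e' := (hm.range_inj hm').mp <| by
    rw [Set.range_comp, Set.range_comp, he.range_eq, he'.range_eq]
  exact funext fun i => hf (congrFun this i)

theorem sum_card_filter_lt {α : Type*} [LinearOrder α] (s : Finset α) :
    ∑ x ∈ s, (s.filter (· < x)).card = s.card.choose 2 := by
  induction s using Finset.induction_on_max with
  | empty => simp
  | insert a s ha ih =>
    have has : a ∉ s := fun h => lt_irrefl a (ha a h)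
    have htop : (insert a s).filter (· < a) = s := by
      ext x
      simp only [Finset.mem_filter, Finset.mem_insert]
      exact ⟨fun ⟨hx, hxa⟩ => hx.resolve_left hxa.ne, fun hx => ⟨Or.inr hx, ha x hx⟩⟩
    have hrest : ∀ x ∈ s, ((insert a s).filter (· < x)).card = (s.filter (· < x)).card :=
      fun x hx => by rw [Finset.filter_insert, if_neg (not_lt.mpr (ha x hx).le)]
    rw [Finset.sum_insert has, htop, Finset.sum_congr rfl hrest, ih,
      Finset.card_insert_of_notMem has, Nat.choose_succ_succ, Nat.choose_one_right]

end Order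

section Tableaux

abbrev Filling (outer inner : List ℕ) : Type :=
  Fin (skewCells outer inner).card → skewCells outer inner

variable {outer inner : List ℕ} {pos : Filling outer inner}

theorem IsSYT.bijective (hS : IsSYT outer inner pos) : Bijective pos := by
  rw [Fintype.bijective_iff_injective_and_card]
  exact ⟨hS.1, by simp⟩

theorem IsSYT.lt_iff_of_row_eq (hS : IsSYT outer inner pos) {a b : Fin _}
    (h : (pos a).1.1 = (pos b).1.1) : a < b ↔ (pos a).1.2 < (pos b).1.2 := by
  refine ⟨fun hab => ?_, hS.2.1 a b h⟩
  rcases lt_trichotomy (pos a).1.2 (pos b).1.2 with h' | h' | h'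
  · exact h'
  · exact absurd (hS.1 (Subtype.ext (Prod.ext h h'))) hab.ne
  · exact absurd (hS.2.1 b a h.symm h') hab.not_gt

def descentTops (pos : Filling outer inner) : Finset (Fin (skewCells outer inner).card) :=
  Finset.univ.filter fun b => ∃ a : Fin _, (a : ℕ) + 1 = b ∧ (pos a).1.1 < (pos b).1.1

def lowerEntries (pos : Filling outer inner) : Finset (Fin (skewCells outer inner).card) :=
  Finset.univ.filter fun b => 0 < (pos b).1.1

theorem desSet_eq_image (pos : Filling outer inner) :
    desSet outer inner pos = (descentTops pos).image Fin.val := by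
  ext v
  simp only [desSet, descentTops, Finset.mem_filter, Finset.mem_range, Finset.mem_image,
    Finset.mem_univ, true_and]
  constructor
  · rintro ⟨-, a, b, ha, rfl, hlt⟩
    exact ⟨b, ⟨a, ha, hlt⟩, rfl⟩
  · rintro ⟨b, ⟨a, ha, hlt⟩, rfl⟩
    exact ⟨b.isLt, a, b, ha, rfl, hlt⟩

theorem desStat_eq_card (pos : Filling outer inner) :
    desStat outer inner pos = (descentTops pos).card := by
  rw [desStat, desSet_eq_image, Finset.card_image_of_injective _ Fin.val_injective]

theorem majStat_eq_sum (pos : Filling outer inner) :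
    majStat outer inner pos = ∑ b ∈ descentTops pos, (b : ℕ) := by
  rw [majStat, desSet_eq_image, Finset.sum_image fun _ _ _ _ h => Fin.val_injective h]
  rfl

theorem descentTops_subset_lowerEntries (pos : Filling outer inner) :
    descentTops pos ⊆ lowerEntries pos := by
  intro b hb
  simp only [descentTops, lowerEntries, Finset.mem_filter, Finset.mem_univ, true_and] at hb ⊢
  obtain ⟨_, _, hlt⟩ := hb
  omega

def rowZeroCount (pos : Filling outer inner) (t : ℕ) : ℕ :=
  (Finset.univ.filter fun b : Fin _ => (b : ℕ) < t ∧ (pos b).1.1 = 0).card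

theorem rowZeroCount_mono (pos : Filling outer inner) :
    Monotone (rowZeroCount pos) := fun _ _ h =>
  Finset.card_le_card fun b hb => by
    simp only [Finset.mem_filter, Finset.mem_univ, true_and] at hb ⊢
    omega

theorem rowZeroCount_lt_of_lt {a b : Fin (skewCells outer inner).card} (hab : a < b)
    (ha : (pos a).1.1 = 0) : rowZeroCount pos a < rowZeroCount pos b := by
  refine Finset.card_lt_card
    ((Finset.ssubset_iff_of_subset fun x hx => ?_).mpr ⟨a, ?_, by simp⟩)
  · simp only [Finset.mem_filter, Finset.mem_univ, true_and] at hx ⊢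
    exact ⟨hx.1.trans hab, hx.2⟩
  · exact Finset.mem_filter.mpr ⟨Finset.mem_univ _, hab, ha⟩

theorem val_eq_rowZeroCount_add_card (pos : Filling outer inner) (b : Fin _) :
    (b : ℕ) = rowZeroCount pos b + ((lowerEntries pos).filter (· < b)).card := by
  have hzero : rowZeroCount pos b = ((Finset.Iio b).filter fun c => (pos c).1.1 = 0).card := by
    rw [rowZeroCount]
    congr 1
    ext c
    simp only [Finset.mem_filter, Finset.mem_univ, Finset.mem_Iio, true_and, Fin.lt_def]
  have hlower : (lowerEntries pos).filter (· < b) =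
      (Finset.Iio b).filter fun c => ¬(pos c).1.1 = 0 := by
    ext c
    simp only [lowerEntries, Finset.mem_filter, Finset.mem_univ, Finset.mem_Iio, true_and]
    omega
  rw [hzero, hlower, Finset.card_filter_add_card_filter_not, Fin.card_Iio]

def entryAt (pos : Filling outer inner) (c : ℕ × ℕ) : ℕ :=
  if h : ∃ b, (pos b).1 = c then ((Classical.choose h : Fin _) : ℕ) else 0

theorem entryAt_eq (hinj : Injective pos) {b : Fin _} {c : ℕ × ℕ} (h : (pos b).1 = c) :
    entryAt pos c = b := by
  have hex : ∃ b, (pos b).1 = c := ⟨b, h⟩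
  rw [entryAt, dif_pos hex, hinj (Subtype.ext ((Classical.choose_spec hex).trans h.symm))]

theorem IsSYT.exists_apply_eq (hS : IsSYT outer inner pos) {c : ℕ × ℕ}
    (hc : c ∈ skewCells outer inner) : ∃ b, (pos b).1 = c ∧ entryAt pos c = b := by
  obtain ⟨b, hb⟩ := hS.bijective.2 ⟨c, hc⟩
  have hb' : (pos b).1 = c := congrArg Subtype.val hb
  exact ⟨b, hb', entryAt_eq hS.1 hb'⟩

theorem row_lt_of_succ_eq (hD : descentTops pos = lowerEntries pos) {a b : Fin _}
    (hab : (a : ℕ) + 1 = b) (hb : 0 < (pos b).1.1) : (pos a).1.1 < (pos b).1.1 := by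
  have hb' : b ∈ descentTops pos := hD ▸ Finset.mem_filter.mpr ⟨Finset.mem_univ _, hb⟩
  obtain ⟨a', ha', hlt⟩ := (Finset.mem_filter.mp hb').2
  rwa [show a' = a from Fin.ext (by omega)] at hlt

theorem row_lt_of_forall_lower (hD : descentTops pos = lowerEntries pos) {a b : Fin _}
    (hab : a < b) (hlow : ∀ t, a < t → t ≤ b → 0 < (pos t).1.1) :
    (pos a).1.1 < (pos b).1.1 := by
  rw [Fin.lt_def] at hab
  obtain ⟨d, hd⟩ : ∃ d, (b : ℕ) = a + d + 1 := ⟨b - a - 1, by omega⟩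
  induction d generalizing b with
  | zero => exact row_lt_of_succ_eq hD hd.symm (hlow b hab le_rfl)
  | succ d ih =>
    let c : Fin (skewCells outer inner).card := ⟨a + d + 1, by omega⟩
    have hac : a < c := Fin.lt_def.mpr (by simp [c])
    have hcb : c < b := Fin.lt_def.mpr (by simp [c]; omega)
    exact (ih hac (fun t h1 h2 => hlow t h1 (h2.trans hcb.le)) rfl).trans
      (row_lt_of_succ_eq hD (by simp [c]; omega) (hlow b hab le_rfl))

/-- No first-row entry lies in `(a, b]`, so every step from `a` to `b` is a descent. -/
theorem row_lt_of_rowZeroCount_eq (hD : descentTops pos = lowerEntries pos) {a b : Fin _}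
    (hab : a < b) (hb : 0 < (pos b).1.1) (h : rowZeroCount pos a = rowZeroCount pos b) :
    (pos a).1.1 < (pos b).1.1 := by
  refine row_lt_of_forall_lower hD hab fun t hat htb => Nat.pos_of_ne_zero fun ht => ?_
  rcases htb.lt_or_eq with htb | rfl
  · have := rowZeroCount_lt_of_lt htb ht
    have := rowZeroCount_mono pos (Fin.le_def.mp hat.le)
    omega
  · omega

end Tableaux

section MaxDescent

variable {m : ℕ} {μ : List ℕ} {pos : Filling (m :: μ) []}

theorem card_lowerEntries (hS : IsSYT (m :: μ) [] pos) : (lowerEntries pos).card = μ.sum := by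
  rw [← card_filter_row_pos_skewCells_cons m μ]
  refine Finset.card_bij (fun b _ => (pos b).1) (fun b hb => ?_) (fun b _ b' _ h => ?_)
    (fun c hc => ?_)
  · exact Finset.mem_filter.mpr ⟨(pos b).2, (Finset.mem_filter.mp hb).2⟩
  · exact hS.1 (Subtype.ext h)
  · obtain ⟨hc, hrow⟩ := Finset.mem_filter.mp hc
    obtain ⟨b, hb, -⟩ := hS.exists_apply_eq hc
    exact ⟨b, Finset.mem_filter.mpr ⟨Finset.mem_univ _, hb ▸ hrow⟩, hb⟩

theorem desStat_eq_sum_iff (hS : IsSYT (m :: μ) [] pos) :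
    desStat (m :: μ) [] pos = μ.sum ↔ descentTops pos = lowerEntries pos := by
  rw [desStat_eq_card, ← card_lowerEntries hS]
  exact ⟨fun h => Finset.eq_of_subset_of_card_le (descentTops_subset_lowerEntries pos) h.ge,
    fun h => by rw [h]⟩

theorem exists_lt_of_row_pos (hs : (m :: μ).Pairwise (· ≥ ·)) (hS : IsSYT (m :: μ) [] pos)
    {b : Fin _} (hb : 0 < (pos b).1.1) : ∃ a, a < b ∧ (pos a).1.1 = 0 := by
  have hmem : (0, (pos b).1.2) ∈ skewCells (m :: μ) [] := by
    have hcell := (mem_skewCells_nil.mp (pos b).2).2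
    have hrow := getD_le_getD_of_pairwise hs (Nat.zero_le (pos b).1.1)
    simp only [List.getD_cons_zero] at hrow
    exact zero_mem_skewCells_cons_iff.mpr (hcell.trans_le hrow)
  obtain ⟨a, ha, -⟩ := hS.exists_apply_eq hmem
  exact ⟨a, hS.2.2 a b (by rw [ha]) (by rw [ha]; exact hb), by rw [ha]⟩

theorem rowZeroCount_eq_card_filter_range (hS : IsSYT (m :: μ) [] pos) (t : ℕ) :
    rowZeroCount pos t = ((Finset.range m).filter fun j => entryAt pos (0, j) < t).card := by
  refine Finset.card_bij (fun b _ => (pos b).1.2) (fun b hb => ?_) (fun b hb b' hb' h => ?_)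
    (fun j hj => ?_)
  · simp only [Finset.mem_filter, Finset.mem_univ, true_and] at hb
    have hcell : (pos b).1 = (0, (pos b).1.2) := Prod.ext hb.2 rfl
    refine Finset.mem_filter.mpr ⟨Finset.mem_range.mpr ?_, ?_⟩
    · exact zero_mem_skewCells_cons_iff.mp (hcell ▸ (pos b).2)
    · rw [← hcell, entryAt_eq hS.1 rfl]
      exact hb.1
  · simp only [Finset.mem_filter, Finset.mem_univ, true_and] at hb hb'
    exact hS.1 (Subtype.ext (Prod.ext (hb.2.trans hb'.2.symm) h))
  · obtain ⟨hj, ht⟩ := Finset.mem_filter.mp hj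
    obtain ⟨b, hb, hentry⟩ :=
      hS.exists_apply_eq (zero_mem_skewCells_cons_iff.mpr (Finset.mem_range.mp hj))
    rw [hentry] at ht
    exact ⟨b, Finset.mem_filter.mpr ⟨Finset.mem_univ _, ht, by rw [hb]⟩, by rw [hb]⟩

theorem rowZeroCount_le (hS : IsSYT (m :: μ) [] pos) (t : ℕ) : rowZeroCount pos t ≤ m := by
  rw [rowZeroCount_eq_card_filter_range hS]
  exact (Finset.card_filter_le _ _).trans (Finset.card_range m).le

theorem rowZeroCount_eq_col (hS : IsSYT (m :: μ) [] pos) {b : Fin _} (hb : (pos b).1.1 = 0) :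
    rowZeroCount pos b = (pos b).1.2 := by
  have hcol : (pos b).1.2 < m :=
    zero_mem_skewCells_cons_iff.mp ((Prod.ext hb rfl : (pos b).1 = (0, (pos b).1.2)) ▸ (pos b).2)
  have hfilter : (Finset.range m).filter (fun j => entryAt pos (0, j) < b) =
      Finset.range (pos b).1.2 := by
    ext j
    simp only [Finset.mem_filter, Finset.mem_range]
    by_cases hj : j < m
    · obtain ⟨a, ha, hentry⟩ := hS.exists_apply_eq (zero_mem_skewCells_cons_iff.mpr hj)
      have hiff := hS.lt_iff_of_row_eq (a := a) (b := b) (by rw [ha, hb])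
      rw [ha] at hiff
      rw [hentry, ← Fin.lt_def, hiff]
      exact ⟨fun h => h.2, fun h => ⟨hj, h⟩⟩
    · exact ⟨fun h => absurd h.1 hj, fun h => absurd (h.trans hcol) hj⟩
  rw [rowZeroCount_eq_card_filter_range hS, hfilter, Finset.card_range]

theorem one_le_rowZeroCount (hs : (m :: μ).Pairwise (· ≥ ·)) (hS : IsSYT (m :: μ) [] pos)
    {b : Fin _} (hb : 0 < (pos b).1.1) : 1 ≤ rowZeroCount pos b := by
  obtain ⟨a, hab, ha⟩ := exists_lt_of_row_pos hs hS hb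
  exact Nat.one_le_of_lt (rowZeroCount_lt_of_lt hab ha)

theorem transpose_mem (hs : (m :: μ).Pairwise (· ≥ ·)) (c : skewCells (m :: μ) [])
    (hc : 0 < c.1.1) : (c.1.2, c.1.1 - 1) ∈ skewCells (conj μ) [] := by
  have hmem := c.2
  rw [show c.1 = (c.1.1 - 1 + 1, c.1.2) from Prod.ext (by omega) rfl] at hmem
  exact (succ_mem_skewCells_cons_iff hs).mp hmem

theorem exists_eq_transpose (hs : (m :: μ).Pairwise (· ≥ ·)) (c : skewCells (m :: μ) [])
    (hc : 0 < c.1.1) : ∃ p : skewCells (conj μ) [], c.1 = (p.1.2 + 1, p.1.1) :=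
  ⟨⟨_, transpose_mem hs c hc⟩, Prod.ext (by simp; omega) rfl⟩

theorem IsSYT.exists_apply_eq_transpose (hs : (m :: μ).Pairwise (· ≥ ·))
    (hS : IsSYT (m :: μ) [] pos) (p : skewCells (conj μ) []) :
    ∃ b, (pos b).1 = (p.1.2 + 1, p.1.1) :=
  (hS.exists_apply_eq ((succ_mem_skewCells_cons_iff hs).mpr p.2)).imp fun _ h => h.1

/-- The label is always `< m` (`toSSYT_val`); the `% m` only makes the definition total. -/
def toSSYT (hm : 0 < m) (pos : Filling (m :: μ) []) (p : skewCells (conj μ) []) : Fin m :=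
  ⟨(rowZeroCount pos (entryAt pos (p.1.2 + 1, p.1.1)) - 1) % m, Nat.mod_lt _ hm⟩

theorem toSSYT_val (hm : 0 < m) (hS : IsSYT (m :: μ) [] pos) (p : skewCells (conj μ) [])
    {b : Fin _} (hb : (pos b).1 = (p.1.2 + 1, p.1.1)) :
    (toSSYT hm pos p : ℕ) = rowZeroCount pos b - 1 := by
  simp only [toSSYT, entryAt_eq hS.1 hb]
  exact Nat.mod_eq_of_lt (by have := rowZeroCount_le hS b; omega)

end MaxDescent

section SSYT

variable {mu : List ℕ} {m : ℕ}

def IsSSYT (T : skewCells mu [] → Fin m) : Prop :=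
  (∀ p q : skewCells mu [], p.1.1 = q.1.1 → p.1.2 ≤ q.1.2 → T p ≤ T q) ∧
  (∀ p q : skewCells mu [], p.1.2 = q.1.2 → p.1.1 < q.1.1 → T p < T q)

theorem schurSpec_eq_sum_isSSYT (mu : List ℕ) (m : ℕ) :
    schurSpec mu m =
      ∑ T ∈ Finset.univ.filter (IsSSYT (mu := mu) (m := m)), X ^ ∑ p, (T p : ℕ) := by
  rw [schurSpec]
  congr 1
  ext T
  simp only [Finset.mem_filter, IsSSYT]

theorem IsSSYT.eq_of_snd_eq {T : skewCells mu [] → Fin m} (hT : IsSSYT T)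
    {p q : skewCells mu []} (h2 : p.1.2 = q.1.2) (h : T p = T q) : p = q := by
  rcases lt_trichotomy p.1.1 q.1.1 with hlt | heq | hlt
  · exact absurd h (hT.2 p q h2 hlt).ne
  · exact Subtype.ext (Prod.ext heq h2)
  · exact absurd h.symm (hT.2 q p h2.symm hlt).ne

theorem IsSSYT.fst_le {μ : List ℕ} (hμ : μ.Pairwise (· ≥ ·))
    {T : skewCells (conj μ) [] → Fin m} (hT : IsSSYT T) (p : skewCells (conj μ) []) :
    p.1.1 ≤ T p := by
  obtain ⟨⟨i, j⟩, hp⟩ := p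
  induction i with
  | zero => exact Nat.zero_le _
  | succ i ih =>
    have hp' : (i, j) ∈ skewCells (conj μ) [] := by
      rw [mem_skewCells_conj hμ] at hp ⊢
      omega
    have hlt := hT.2 ⟨_, hp'⟩ ⟨_, hp⟩ rfl (Nat.lt_succ_self i)
    have := ih hp'
    rw [Fin.lt_def] at hlt
    dsimp only at this ⊢
    omega

end SSYT

section SortKey

variable {m : ℕ} {μ : List ℕ} {T : skewCells (conj μ) [] → Fin m}

def sortKey (T : skewCells (conj μ) [] → Fin m) (c : skewCells (m :: μ) []) : ℕ ×ₗ ℕ :=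
  toLex (if c.1.1 = 0 then c.1.2
    else if h : (c.1.2, c.1.1 - 1) ∈ skewCells (conj μ) [] then T ⟨_, h⟩ else 0, c.1.1)

theorem sortKey_of_eq_zero {c : skewCells (m :: μ) []} {j : ℕ} (h : c.1 = (0, j)) :
    sortKey T c = toLex (j, 0) := by
  simp [sortKey, h]

theorem sortKey_of_eq_transpose {c : skewCells (m :: μ) []} {p : skewCells (conj μ) []}
    (h : c.1 = (p.1.2 + 1, p.1.1)) : sortKey T c = toLex ((T p : ℕ), p.1.2 + 1) := by
  simp [sortKey, h]

theorem sortKey_injective (hs : (m :: μ).Pairwise (· ≥ ·)) (hT : IsSSYT T) :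
    Injective (sortKey T) := by
  intro c d h
  have hrow : c.1.1 = d.1.1 := by simpa [sortKey] using congrArg (fun k => (ofLex k).2) h
  rcases Nat.eq_zero_or_pos c.1.1 with hc | hc
  · rw [sortKey_of_eq_zero (Prod.ext hc rfl), sortKey_of_eq_zero (Prod.ext (hrow ▸ hc) rfl)] at h
    simp only [toLex_inj, Prod.mk.injEq, and_true] at h
    exact Subtype.ext (Prod.ext hrow h)
  · obtain ⟨p, hp⟩ := exists_eq_transpose hs c hc
    obtain ⟨q, hq⟩ := exists_eq_transpose hs d (hrow ▸ hc)
    rw [sortKey_of_eq_transpose hp, sortKey_of_eq_transpose hq] at h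
    simp only [toLex_inj, Prod.mk.injEq, Nat.add_right_cancel_iff] at h
    have hpq : p = q := hT.eq_of_snd_eq h.2 (Fin.ext h.1)
    exact Subtype.ext (hp.trans (hpq ▸ hq.symm))

variable {pos : Filling (m :: μ) []}

theorem isSYT_of_strictMono_sortKey (hs : (m :: μ).Pairwise (· ≥ ·)) (hT : IsSSYT T)
    (hinj : Injective pos) (hmono : StrictMono (sortKey T ∘ pos)) : IsSYT (m :: μ) [] pos := by
  refine ⟨hinj, fun a b hrow hcol => hmono.lt_iff_lt.mp ?_,
    fun a b hcol hrow => hmono.lt_iff_lt.mp ?_⟩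
  · simp only [comp_apply]
    rcases Nat.eq_zero_or_pos (pos a).1.1 with ha | ha
    · rw [sortKey_of_eq_zero (j := (pos a).1.2) (Prod.ext ha rfl),
        sortKey_of_eq_zero (Prod.ext (hrow ▸ ha) rfl), Prod.Lex.toLex_lt_toLex]
      exact Or.inl hcol
    · obtain ⟨p, hp⟩ := exists_eq_transpose hs (pos a) ha
      obtain ⟨q, hq⟩ := exists_eq_transpose hs (pos b) (hrow ▸ ha)
      rw [sortKey_of_eq_transpose hp, sortKey_of_eq_transpose hq, Prod.Lex.toLex_lt_toLex]
      rw [hp, hq] at hrow hcol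
      simp only [Nat.add_right_cancel_iff] at hrow hcol
      exact Or.inl (hT.2 p q hrow hcol)
  · simp only [comp_apply]
    obtain ⟨q, hq⟩ := exists_eq_transpose hs (pos b) (by omega)
    rw [sortKey_of_eq_transpose hq]
    rw [hq] at hcol hrow
    rcases Nat.eq_zero_or_pos (pos a).1.1 with ha | ha
    · rw [sortKey_of_eq_zero (j := (pos a).1.2) (Prod.ext ha rfl), Prod.Lex.toLex_lt_toLex]
      have hc : (pos a).1.2 = q.1.1 := hcol
      have := hT.fst_le hs.of_cons q
      dsimp only
      omega
    · obtain ⟨p, hp⟩ := exists_eq_transpose hs (pos a) ha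
      rw [sortKey_of_eq_transpose hp, Prod.Lex.toLex_lt_toLex]
      rw [hp] at hcol hrow
      have hle := hT.1 p q hcol (by dsimp only at hrow; omega)
      rw [Fin.le_def] at hle
      dsimp only at hrow ⊢
      omega

theorem descentTops_eq_of_strictMono_sortKey (hs : (m :: μ).Pairwise (· ≥ ·))
    (hbij : Bijective pos) (hmono : StrictMono (sortKey T ∘ pos)) :
    descentTops pos = lowerEntries pos := by
  refine (descentTops_subset_lowerEntries pos).antisymm fun b hb => ?_
  obtain ⟨p, hp⟩ := exists_eq_transpose hs (pos b) (Finset.mem_filter.mp hb).2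
  obtain ⟨b₀, hb₀⟩ := hbij.2 ⟨(0, T p), zero_mem_skewCells_cons_iff.mpr (T p).isLt⟩
  have hkey := sortKey_of_eq_transpose (T := T) hp
  have hkey₀ := sortKey_of_eq_zero (T := T) (congrArg Subtype.val hb₀)
  have hb₀b : b₀ < b := hmono.lt_iff_lt.mp <| by
    rw [comp_apply, comp_apply, hkey, hkey₀, Prod.Lex.toLex_lt_toLex]
    exact Or.inr ⟨rfl, Nat.succ_pos _⟩
  rw [Fin.lt_def] at hb₀b
  -- `b - 1` lies between `b₀` and `b`, whose keys differ only in the row component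
  let a : Fin (skewCells (m :: μ) []).card := ⟨b - 1, by omega⟩
  have hlt := hmono (show a < b from Fin.lt_def.mpr (by simp [a]; omega))
  have hle := hmono.monotone (show b₀ ≤ a from Fin.le_def.mpr (by simp [a]; omega))
  simp only [comp_apply] at hlt hle
  rw [hkey] at hlt
  rw [hkey₀] at hle
  simp only [sortKey, Prod.Lex.toLex_lt_toLex, Prod.Lex.toLex_le_toLex] at hlt hle
  refine Finset.mem_filter.mpr ⟨Finset.mem_univ _, a, by simp [a]; omega, ?_⟩
  rw [hp]
  omega

theorem toSSYT_of_strictMono_sortKey (hm : 0 < m) (hs : (m :: μ).Pairwise (· ≥ ·))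
    (hT : IsSSYT T) (hbij : Bijective pos) (hmono : StrictMono (sortKey T ∘ pos)) :
    toSSYT hm pos = T := by
  have hS := isSYT_of_strictMono_sortKey hs hT hbij.1 hmono
  funext p
  obtain ⟨b, hb⟩ := hS.exists_apply_eq_transpose hs p
  have hfilter : (Finset.range m).filter (fun j => entryAt pos (0, j) < b) =
      Finset.range (T p + 1) := by
    ext j
    simp only [Finset.mem_filter, Finset.mem_range]
    by_cases hj : j < m
    · obtain ⟨a, ha, hentry⟩ := hS.exists_apply_eq (zero_mem_skewCells_cons_iff.mpr hj)
      rw [hentry, ← Fin.lt_def, ← hmono.lt_iff_lt, comp_apply, comp_apply,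
        sortKey_of_eq_zero ha, sortKey_of_eq_transpose hb, Prod.Lex.toLex_lt_toLex]
      omega
    · have := (T p).isLt
      omega
  apply Fin.ext
  rw [toSSYT_val hm hS p hb, rowZeroCount_eq_card_filter_range hS, hfilter, Finset.card_range,
    Nat.add_sub_cancel]

end SortKey

section Bijection

variable {m : ℕ} {μ : List ℕ} {pos : Filling (m :: μ) []}

theorem isSSYT_toSSYT (hm : 0 < m) (hs : (m :: μ).Pairwise (· ≥ ·))
    (hS : IsSYT (m :: μ) [] pos) (hD : descentTops pos = lowerEntries pos) :
    IsSSYT (toSSYT hm pos) := by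
  constructor
  · intro p q hrow hcol
    rcases hcol.lt_or_eq with hcol | hcol
    · obtain ⟨a, ha⟩ := hS.exists_apply_eq_transpose hs p
      obtain ⟨b, hb⟩ := hS.exists_apply_eq_transpose hs q
      have hab : a < b := hS.2.2 a b (by rw [ha, hb, hrow]) (by rw [ha, hb]; simpa using hcol)
      rw [Fin.le_def, toSSYT_val hm hS p ha, toSSYT_val hm hS q hb]
      exact Nat.sub_le_sub_right (rowZeroCount_mono pos (Fin.le_def.mp hab.le)) 1
    · exact le_of_eq (congrArg _ (Subtype.ext (Prod.ext hrow hcol)))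
  · intro p q hcol hrow
    obtain ⟨a, ha⟩ := hS.exists_apply_eq_transpose hs p
    obtain ⟨b, hb⟩ := hS.exists_apply_eq_transpose hs q
    have hab : a < b := hS.2.1 a b (by rw [ha, hb, hcol]) (by rw [ha, hb]; exact hrow)
    have hle := rowZeroCount_mono pos (Fin.le_def.mp hab.le)
    have hne : rowZeroCount pos a ≠ rowZeroCount pos b := fun h =>
      (row_lt_of_rowZeroCount_eq hD hab (by rw [hb]; omega) h).ne (by rw [ha, hb, hcol])
    have h1 := one_le_rowZeroCount hs hS (b := a) (by rw [ha]; omega)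
    rw [Fin.lt_def, toSSYT_val hm hS p ha, toSSYT_val hm hS q hb]
    omega

theorem sortKey_toSSYT_of_row_eq_zero (hm : 0 < m) (hS : IsSYT (m :: μ) [] pos) {b : Fin _}
    (hb : (pos b).1.1 = 0) : sortKey (toSSYT hm pos) (pos b) = toLex (rowZeroCount pos b, 0) := by
  rw [sortKey_of_eq_zero (j := (pos b).1.2) (Prod.ext hb rfl), rowZeroCount_eq_col hS hb]

theorem sortKey_toSSYT_of_row_pos (hm : 0 < m) (hs : (m :: μ).Pairwise (· ≥ ·))
    (hS : IsSYT (m :: μ) [] pos) {b : Fin _} (hb : 0 < (pos b).1.1) :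
    sortKey (toSSYT hm pos) (pos b) = toLex (rowZeroCount pos b - 1, (pos b).1.1) := by
  obtain ⟨p, hp⟩ := exists_eq_transpose hs (pos b) hb
  rw [sortKey_of_eq_transpose hp, toSSYT_val hm hS p hp, hp]

theorem strictMono_sortKey_toSSYT (hm : 0 < m) (hs : (m :: μ).Pairwise (· ≥ ·))
    (hS : IsSYT (m :: μ) [] pos) (hD : descentTops pos = lowerEntries pos) :
    StrictMono (sortKey (toSSYT hm pos) ∘ pos) := by
  intro a b hab
  have hle := rowZeroCount_mono pos (Fin.le_def.mp hab.le)
  simp only [comp_apply]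
  rcases Nat.eq_zero_or_pos (pos a).1.1 with ha | ha
  · have hlt := rowZeroCount_lt_of_lt hab ha
    rw [sortKey_toSSYT_of_row_eq_zero hm hS ha]
    rcases Nat.eq_zero_or_pos (pos b).1.1 with hb | hb
    · rw [sortKey_toSSYT_of_row_eq_zero hm hS hb, Prod.Lex.toLex_lt_toLex]
      exact Or.inl hlt
    · rw [sortKey_toSSYT_of_row_pos hm hs hS hb, Prod.Lex.toLex_lt_toLex]
      omega
  · have h1 := one_le_rowZeroCount hs hS ha
    rw [sortKey_toSSYT_of_row_pos hm hs hS ha]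
    rcases Nat.eq_zero_or_pos (pos b).1.1 with hb | hb
    · rw [sortKey_toSSYT_of_row_eq_zero hm hS hb, Prod.Lex.toLex_lt_toLex]
      omega
    · rw [sortKey_toSSYT_of_row_pos hm hs hS hb, Prod.Lex.toLex_lt_toLex]
      rcases hle.lt_or_eq with hlt | heq
      · omega
      · exact Or.inr ⟨by rw [heq], row_lt_of_rowZeroCount_eq hD hab hb heq⟩

theorem toSSYT_inj (hm : 0 < m) (hs : (m :: μ).Pairwise (· ≥ ·)) {pos' : Filling (m :: μ) []}
    (hS : IsSYT (m :: μ) [] pos) (hD : descentTops pos = lowerEntries pos)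
    (hS' : IsSYT (m :: μ) [] pos') (hD' : descentTops pos' = lowerEntries pos')
    (h : toSSYT hm pos = toSSYT hm pos') : pos = pos' :=
  eq_of_strictMono_comp (sortKey_injective hs (isSSYT_toSSYT hm hs hS hD)) hS.bijective.2
    hS'.bijective.2 (strictMono_sortKey_toSSYT hm hs hS hD)
    (h ▸ strictMono_sortKey_toSSYT hm hs hS' hD')

theorem exists_toSSYT_eq (hm : 0 < m) (hs : (m :: μ).Pairwise (· ≥ ·))
    {T : skewCells (conj μ) [] → Fin m} (hT : IsSSYT T) :
    ∃ pos : Filling (m :: μ) [],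
      IsSYT (m :: μ) [] pos ∧ descentTops pos = lowerEntries pos ∧ toSSYT hm pos = T := by
  obtain ⟨pos, hbij, hmono⟩ :=
    exists_bijective_strictMono_comp (sortKey_injective hs hT) (Fintype.card_coe _)
  exact ⟨pos, isSYT_of_strictMono_sortKey hs hT hbij.1 hmono,
    descentTops_eq_of_strictMono_sortKey hs hbij hmono,
    toSSYT_of_strictMono_sortKey hm hs hT hbij hmono⟩

theorem sum_toSSYT (hm : 0 < m) (hs : (m :: μ).Pairwise (· ≥ ·))
    (hS : IsSYT (m :: μ) [] pos) :
    ∑ p, (toSSYT hm pos p : ℕ) = ∑ b ∈ lowerEntries pos, (rowZeroCount pos b - 1) := by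
  symm
  refine Finset.sum_bij (fun b hb => ⟨_, transpose_mem hs (pos b) (Finset.mem_filter.mp hb).2⟩)
    (fun _ _ => Finset.mem_univ _) (fun b hb b' hb' h => ?_) (fun p _ => ?_) (fun b hb => ?_)
  · have hb := (Finset.mem_filter.mp hb).2
    have hb' := (Finset.mem_filter.mp hb').2
    simp only [Subtype.mk.injEq, Prod.mk.injEq] at h
    exact hS.1 (Subtype.ext (Prod.ext (by omega) h.1))
  · obtain ⟨b, hb⟩ := hS.exists_apply_eq_transpose hs p
    refine ⟨b, Finset.mem_filter.mpr ⟨Finset.mem_univ _, by rw [hb]; omega⟩, ?_⟩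
    exact Subtype.ext (by simp [hb])
  · have hb := (Finset.mem_filter.mp hb).2
    rw [toSSYT_val hm hS _ (Prod.ext (by simp; omega) rfl)]

theorem majStat_eq (hm : 0 < m) (hs : (m :: μ).Pairwise (· ≥ ·)) (hS : IsSYT (m :: μ) [] pos)
    (hD : descentTops pos = lowerEntries pos) :
    majStat (m :: μ) [] pos = (μ.sum + 1).choose 2 + ∑ p, (toSSYT hm pos p : ℕ) := by
  have hcount : ∑ b ∈ lowerEntries pos, rowZeroCount pos b =
      ∑ b ∈ lowerEntries pos, (rowZeroCount pos b - 1) + μ.sum := by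
    rw [← card_lowerEntries hS, Finset.card_eq_sum_ones (lowerEntries pos),
      ← Finset.sum_add_distrib]
    exact Finset.sum_congr rfl fun b hb =>
      (Nat.sub_add_cancel (one_le_rowZeroCount hs hS (Finset.mem_filter.mp hb).2)).symm
  rw [majStat_eq_sum, hD, Finset.sum_congr rfl fun b _ => val_eq_rowZeroCount_add_card pos b,
    Finset.sum_add_distrib, sum_card_filter_lt, card_lowerEntries hS, hcount,
    sum_toSSYT hm hs hS, Nat.choose_succ_succ, Nat.choose_one_right]
  ring

end Bijection

/-- Let `λ = (λ_1,…,λ_r)` be a partition of `n` with `r` (positive)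
parts and set `α = (λ_2,…,λ_r)`.  Then
`f_{λ, n-λ_1}(q) = q^{binom(n-λ_1+1, 2)} · s_{α'}(1, q, …, q^{λ_1-1})`. -/
theorem stmt12 (n r : ℕ) (lam : List ℕ) (hr : 1 ≤ r) (hlen : lam.length = r)
    (hsort : List.Pairwise (· ≥ ·) lam) (hpos : ∀ x ∈ lam, 0 < x) (hsum : lam.sum = n) :
    fPoly lam (n - lam.headD 0) =
      X ^ ((n - lam.headD 0 + 1).choose 2) * schurSpec (conj lam.tail) (lam.headD 0) := by
  obtain ⟨m, μ, rfl⟩ := List.exists_cons_of_length_pos (by omega : 0 < lam.length)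
  have hm : 0 < m := hpos m List.mem_cons_self
  have hn : n - m = μ.sum := by simp only [List.sum_cons] at hsum; omega
  have hmem : ∀ pos, pos ∈ (SYTs (m :: μ) []).filter (desStat (m :: μ) [] · = μ.sum) ↔
      IsSYT (m :: μ) [] pos ∧ descentTops pos = lowerEntries pos := fun pos => by
    simp only [Finset.mem_filter, SYTs, Finset.mem_univ, true_and]
    exact and_congr_right desStat_eq_sum_iff
  rw [List.headD_cons, List.tail_cons, hn, fPoly, fSkew, schurSpec_eq_sum_isSSYT, Finset.mul_sum]
  refine Finset.sum_bij (fun pos _ => toSSYT hm pos) (fun pos hpos => ?_)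
    (fun pos hpos pos' hpos' h => ?_) (fun T hT => ?_) (fun pos hpos => ?_)
  · obtain ⟨hS, hD⟩ := (hmem pos).mp hpos
    exact Finset.mem_filter.mpr ⟨Finset.mem_univ _, isSSYT_toSSYT hm hsort hS hD⟩
  · obtain ⟨hS, hD⟩ := (hmem pos).mp hpos
    obtain ⟨hS', hD'⟩ := (hmem pos').mp hpos'
    exact toSSYT_inj hm hsort hS hD hS' hD' h
  · obtain ⟨pos, hS, hD, rfl⟩ := exists_toSSYT_eq hm hsort (Finset.mem_filter.mp hT).2
    exact ⟨pos, (hmem pos).mpr ⟨hS, hD⟩, rfl⟩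
  · obtain ⟨hS, hD⟩ := (hmem pos).mp hpos
    rw [← pow_add, majStat_eq hm hsort hS hD]
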